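/- For N ≥ 4 and z ≠ 0, the state X_N(z) = |1⟩^⊗N + z^{N-1} √N · W_N has optimal bond dimension exactly N-1; explicitly, X_N(z) = (1/(N-1)) ∑_{k=1}^{N-1} (|1⟩ + e^{2πi(k-1)/(N-1)} z |0⟩)^⊗N, and it cannot be written as a sum of N-2 or fewer tensor powers of qubit vectors. -/

import Mathlib

open scoped BigOperators

/-- The `N`-fold tensor power of a qubit vector `x : Fin 2 → ℂ`, written as a
coefficient tensor on `(Fin N → Fin 2)`. -/
def tpow (x : Fin 2 → ℂ) (N : ℕ) : (Fin N → Fin 2) → ℂ :=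
  fun f => ∏ i, x (f i)

/-- A state of `N` qubits is symmetric if it is invariant under every
permutation of the tensor factors. -/
def IsSymmetricState {N : ℕ} (ψ : (Fin N → Fin 2) → ℂ) : Prop :=
  ∀ σ : Equiv.Perm (Fin N), ∀ f : Fin N → Fin 2, ψ (f ∘ σ) = ψ f

/-- A family of qubit vectors is pairwise linearly independent if every two
distinct members are linearly independent. -/
def PairwiseLinIndep {D : ℕ} (x : Fin D → Fin 2 → ℂ) : Prop :=
  ∀ k l : Fin D, k ≠ l → LinearIndependent ℂ ![x k, x l]

/-- Optimal bond dimension: the minimal `D` such that `ψ` is a sum of `D`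
`N`-fold tensor powers of qubit vectors. -/
noncomputable def bondDim {N : ℕ} (ψ : (Fin N → Fin 2) → ℂ) : ℕ :=
  sInf {D | ∃ x : Fin D → Fin 2 → ℂ, ψ = ∑ k : Fin D, tpow (x k) N}

/-- Standard basis vector `|0⟩` of `ℂ²`. -/
def e0 : Fin 2 → ℂ := fun i => if i = 0 then 1 else 0

/-- Standard basis vector `|1⟩` of `ℂ²`. -/
def e1 : Fin 2 → ℂ := fun i => if i = 1 then 1 else 0

/-- The GHZ state of `N` qubits. -/
noncomputable def GHZ (N : ℕ) : (Fin N → Fin 2) → ℂ :=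
  (1 / (Real.sqrt 2 : ℂ)) • (tpow e0 N + tpow e1 N)

/-- The W state of `N` qubits. -/
noncomputable def Wstate (N : ℕ) : (Fin N → Fin 2) → ℂ :=
  fun f => (1 / (Real.sqrt N : ℂ)) *
    ∑ j : Fin N, ∏ i : Fin N, (if i = j then e1 (f i) else e0 (f i))

/-- Tensor product of an `M`-qubit tensor and an `L`-qubit tensor. -/
def otimes {M L : ℕ} (ξ : (Fin M → Fin 2) → ℂ) (χ : (Fin L → Fin 2) → ℂ) :
    (Fin (M + L) → Fin 2) → ℂ :=
  fun f => ξ (fun i => f (Fin.castAdd L i)) * χ (fun j => f (Fin.natAdd M j))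

/-- Schmidt rank of an `(M, L)`-bipartite state: the minimal number of product
terms needed to express it. -/
noncomputable def schmidtRank {M L : ℕ} (ψ : (Fin (M + L) → Fin 2) → ℂ) : ℕ :=
  sInf {s | ∃ ξ : Fin s → (Fin M → Fin 2) → ℂ, ∃ χ : Fin s → (Fin L → Fin 2) → ℂ,
    ψ = ∑ k : Fin s, otimes (ξ k) (χ k)}

/-- Reduced density matrix of the first `M` qubits of an `(M + L)`-qubit state,
obtained by tracing out the last `L` qubits. -/
noncomputable def rdm (M L : ℕ) (ψ : (Fin (M + L) → Fin 2) → ℂ) :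
    Matrix (Fin M → Fin 2) (Fin M → Fin 2) ℂ :=
  Matrix.of fun a b => ∑ g : Fin L → Fin 2, ψ (Fin.append a g) * star (ψ (Fin.append b g))

/-!
The coefficient of a sum `∑ₖ xₖ^{⊗N}` at a basis configuration with `c` zeros is the moment
`∑ₖ aₖ^c bₖ^(N-c)`, where `xₖ = (aₖ, bₖ)`; for `X_N(z)` these moments are
`δ_{c,0} + z^(N-1) δ_{c,N-1}`. The explicit decomposition follows from the orthogonality of the
`(N-1)`-st roots of unity, which kill every moment except `c = 0` and `c = N - 1`. Conversely,
if `D ≤ N - 2` terms sufficed, the monic polynomial `∏ₖ (X - aₖ/bₖ)` of degree `D` would give a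
linear recurrence for the moments, and applying it to the window ending at `c = N - 1` forces
`z^(N-1) = 0`.
-/

open Finset Polynomial

section Counting

variable {N : ℕ}

def numZeros (f : Fin N → Fin 2) : ℕ := #{i | f i = 0}

def numOnes (f : Fin N → Fin 2) : ℕ := #{i | f i = 1}

lemma numZeros_add_numOnes (f : Fin N → Fin 2) : numZeros f + numOnes f = N := by
  have h := card_filter_add_card_filter_not (s := univ) (fun i => f i = 0)
  have hnot : ∀ i, ¬ f i = 0 ↔ f i = 1 := fun i => by omega
  simpa [numZeros, numOnes, hnot] using h

lemma exists_numZeros_eq {j : ℕ} (hj : j ≤ N) : ∃ f : Fin N → Fin 2, numZeros f = j := by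
  refine ⟨fun i => if (i : ℕ) < j then 0 else 1, ?_⟩
  have hzero : ∀ i : Fin N, (if (i : ℕ) < j then (0 : Fin 2) else 1) = 0 ↔ (i : ℕ) < j := by
    intro i; split_ifs with h <;> simp [h]
  simp only [numZeros, hzero, Fin.card_filter_val_lt, min_eq_right hj]

lemma tpow_apply (x : Fin 2 → ℂ) (f : Fin N → Fin 2) :
    tpow x N f = x 0 ^ numZeros f * x 1 ^ numOnes f := by
  rw [tpow, ← Finset.prod_fiberwise' univ f x, Fin.prod_univ_two]
  simp [numZeros, numOnes]

lemma tpow_smul (c : ℂ) (x : Fin 2 → ℂ) : tpow (c • x) N = c ^ N • tpow x N := by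
  ext f
  simp [tpow, Finset.prod_mul_distrib]

lemma Wstate_apply (f : Fin N → Fin 2) :
    Wstate N f = 1 / (Real.sqrt N : ℂ) * if numOnes f = 1 then 1 else 0 := by
  have hprod : ∀ j, ∏ i : Fin N, (if i = j then e1 (f i) else e0 (f i)) =
      if ({i | f i = 1} : Finset (Fin N)) = {j} then 1 else 0 := by
    intro j
    have hfactor : ∀ i, (if i = j then e1 (f i) else e0 (f i)) =
        if (f i = 1 ↔ i = j) then 1 else 0 := by
      intro i
      by_cases hij : i = j <;> rcases Fin.exists_fin_two.mp ⟨f i, rfl⟩ with h | h <;>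
        simp [hij, h, e0, e1]
    simp only [hfactor, Fintype.prod_boole, Finset.ext_iff, mem_filter, mem_univ, true_and,
      mem_singleton]
    congr
  simp only [Wstate, hprod]
  congr 1
  by_cases hone : numOnes f = 1
  · rw [if_pos hone]
    obtain ⟨j₀, hj₀⟩ := card_eq_one.mp hone
    simp [hj₀]
  · rw [if_neg hone]
    refine sum_eq_zero fun j _ => if_neg fun h => hone ?_
    rw [numOnes, h, card_singleton]

end Counting

noncomputable def stateX (N : ℕ) (z : ℂ) : (Fin N → Fin 2) → ℂ :=
  tpow e1 N + (z ^ (N - 1) * (Real.sqrt N : ℂ)) • Wstate N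

lemma stateX_apply {N : ℕ} (hN : N ≠ 0) (z : ℂ) (f : Fin N → Fin 2) :
    stateX N z f =
      (if numZeros f = 0 then 1 else 0) + z ^ (N - 1) * if numOnes f = 1 then 1 else 0 := by
  have hsqrt : (Real.sqrt N : ℂ) ≠ 0 := by
    rw [Complex.ofReal_ne_zero, Real.sqrt_ne_zero']
    positivity
  have he1 : tpow e1 N f = if numZeros f = 0 then 1 else 0 := by
    simp [tpow_apply, e1, zero_pow_eq]
  simp only [stateX, Pi.add_apply, Pi.smul_apply, smul_eq_mul, he1, Wstate_apply]
  field_simp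

lemma IsPrimitiveRoot.sum_pow_pow {R : Type*} [CommRing R] [IsDomain R] {ζ : R} {n : ℕ}
    (hζ : IsPrimitiveRoot ζ n) (c : ℕ) :
    ∑ k ∈ range n, (ζ ^ k) ^ c = if n ∣ c then (n : R) else 0 := by
  simp_rw [← pow_mul, mul_comm _ c, pow_mul]
  split_ifs with hdvd
  · simp [(hζ.pow_eq_one_iff_dvd c).mpr hdvd]
  · have hne : ζ ^ c - 1 ≠ 0 := sub_ne_zero.mpr fun h => hdvd ((hζ.pow_eq_one_iff_dvd c).mp h)
    have hgeom := geom_sum_mul (ζ ^ c) n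
    rw [pow_right_comm, hζ.pow_eq_one, one_pow, sub_self] at hgeom
    exact (mul_eq_zero.mp hgeom).resolve_right hne

lemma Complex.sum_exp_two_pi_I_mul_div_pow {n : ℕ} (hn : n ≠ 0) (c : ℕ) :
    ∑ k : Fin n, Complex.exp (2 * Real.pi * Complex.I * (k : ℕ) / n) ^ c =
      if n ∣ c then (n : ℂ) else 0 := by
  have hexp : ∀ k : ℕ, Complex.exp (2 * Real.pi * Complex.I * k / n) =
      Complex.exp (2 * Real.pi * Complex.I / n) ^ k := by
    intro k
    rw [← Complex.exp_nat_mul]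
    ring_nf
  simp only [hexp]
  rw [Fin.sum_univ_eq_sum_range (fun k => (Complex.exp (2 * Real.pi * Complex.I / n) ^ k) ^ c)]
  exact (Complex.isPrimitiveRoot_exp n hn).sum_pow_pow c

lemma Nat.dvd_iff_eq_zero_or_eq_of_le_add_one {n c : ℕ} (hn : 2 ≤ n) (hc : c ≤ n + 1) :
    n ∣ c ↔ c = 0 ∨ c = n := by
  constructor
  · rintro ⟨q, rfl⟩
    rcases q with _ | _ | q
    · simp
    · simp
    · nlinarith
  · rintro (rfl | rfl)
    exacts [dvd_zero n, dvd_rfl]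

lemma stateX_eq_smul_sum_tpow {N : ℕ} (hN : 3 ≤ N) (z : ℂ) :
    stateX N z = ((1 : ℂ) / ((N : ℂ) - 1)) • ∑ k : Fin (N - 1), tpow
      (fun i : Fin 2 => if i = 1 then 1 else
        Complex.exp (2 * (Real.pi : ℂ) * Complex.I * (k : ℕ) / ((N : ℂ) - 1)) * z) N := by
  have hcast : (N : ℂ) - 1 = ((N - 1 : ℕ) : ℂ) := by
    push_cast [Nat.cast_sub (by omega : 1 ≤ N)]; ring
  have hN1 : ((N - 1 : ℕ) : ℂ) ≠ 0 := Nat.cast_ne_zero.mpr (by omega)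
  ext f
  have hcount := numZeros_add_numOnes f
  have hdvd : N - 1 ∣ numZeros f ↔ numZeros f = 0 ∨ numOnes f = 1 := by
    rw [Nat.dvd_iff_eq_zero_or_eq_of_le_add_one (by omega) (by omega)]
    omega
  have hterm : ∀ k : Fin (N - 1), tpow (fun i : Fin 2 => if i = 1 then 1 else
      Complex.exp (2 * (Real.pi : ℂ) * Complex.I * (k : ℕ) / ((N - 1 : ℕ) : ℂ)) * z) N f =
      Complex.exp (2 * (Real.pi : ℂ) * Complex.I * (k : ℕ) / ((N - 1 : ℕ) : ℂ)) ^ numZeros f *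
        z ^ numZeros f := by
    simp [tpow_apply, mul_pow]
  simp only [stateX_apply (by omega : N ≠ 0), Pi.smul_apply, Finset.sum_apply, smul_eq_mul,
    hcast, hterm, ← Finset.sum_mul, Complex.sum_exp_two_pi_I_mul_div_pow (by omega : N - 1 ≠ 0),
    hdvd]
  by_cases h0 : numZeros f = 0
  · have h1 : numOnes f ≠ 1 := by omega
    simp [h0, h1, hN1]
  · by_cases h1 : numOnes f = 1
    · have : numZeros f = N - 1 := by omega
      simp [h1, hN1, this, show N - 1 ≠ 0 by omega]
    · simp [h0, h1]

section Moments

variable {K : Type*} [Field K]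

lemma sum_coeff_mul_pow_mul_pow_eq_zero {P : K[X]} {a b : K} (hP : b ≠ 0 → P.eval (a / b) = 0)
    {N m : ℕ} (hm : m + P.natDegree < N) :
    ∑ i ∈ range (P.natDegree + 1), P.coeff i * (a ^ (m + i) * b ^ (N - (m + i))) = 0 := by
  by_cases hb : b = 0
  · refine sum_eq_zero fun i hi => ?_
    rw [mem_range] at hi
    rw [hb, zero_pow (by omega), mul_zero, mul_zero]
  · calc ∑ i ∈ range (P.natDegree + 1), P.coeff i * (a ^ (m + i) * b ^ (N - (m + i)))
        = a ^ m * b ^ (N - m) * ∑ i ∈ range (P.natDegree + 1), P.coeff i * (a / b) ^ i := by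
          rw [mul_sum]
          refine sum_congr rfl fun i hi => ?_
          rw [mem_range] at hi
          rw [div_pow, show N - m = N - (m + i) + i by omega, pow_add, pow_add]
          field_simp
      _ = 0 := by rw [← eval_eq_sum_range, hP hb, mul_zero]

lemma sum_coeff_mul_moment_eq_zero {ι : Type*} [Fintype ι] {P : K[X]} {a b : ι → K}
    (hP : ∀ k, b k ≠ 0 → P.eval (a k / b k) = 0) {N m : ℕ} (hm : m + P.natDegree < N) :
    ∑ i ∈ range (P.natDegree + 1), P.coeff i * ∑ k, a k ^ (m + i) * b k ^ (N - (m + i)) = 0 := by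
  simp_rw [mul_sum]
  rw [sum_comm]
  exact sum_eq_zero fun k _ => sum_coeff_mul_pow_mul_pow_eq_zero (hP k) hm

end Moments

lemma le_card_of_stateX_eq_sum_tpow {N D : ℕ} {z : ℂ} (hz : z ≠ 0) {x : Fin D → Fin 2 → ℂ}
    (h : stateX N z = ∑ k, tpow (x k) N) : N - 1 ≤ D := by
  by_contra! hD
  -- for `x k 1 = 0` the junk root `x k 0 / 0 = 0` is harmless: only the degree `D` matters
  set P : ℂ[X] := ∏ k, (X - C (x k 0 / x k 1))
  have hdeg : P.natDegree = D := by simp [P]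
  have hroot : ∀ k, x k 1 ≠ 0 → P.eval (x k 0 / x k 1) = 0 := fun k _ => by
    rw [eval_prod]
    exact prod_eq_zero (mem_univ k) (by simp)
  have hmoment : ∀ j ≤ N, ∑ k, x k 0 ^ j * x k 1 ^ (N - j) =
      (if j = 0 then 1 else 0) + z ^ (N - 1) * if N - j = 1 then 1 else 0 := by
    intro j hj
    obtain ⟨f, hf⟩ := exists_numZeros_eq hj
    have hones : numOnes f = N - j := by have := numZeros_add_numOnes f; omega
    have hf' := congrFun h f
    rw [stateX_apply (by omega), Finset.sum_apply] at hf'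
    simp only [tpow_apply, hf, hones] at hf'
    exact hf'.symm
  have hterm : ∀ i ∈ range (D + 1), P.coeff i *
      ∑ k, x k 0 ^ (N - 1 - D + i) * x k 1 ^ (N - (N - 1 - D + i)) =
      if i = D then z ^ (N - 1) else 0 := by
    intro i hi
    rw [mem_range] at hi
    rw [hmoment _ (by omega), if_neg (by omega)]
    by_cases hiD : i = D
    · subst hiD
      rw [← hdeg, (monic_prod_X_sub_C _ _).coeff_natDegree]
      simp [show N - (N - 1 - P.natDegree + P.natDegree) = 1 by omega]
    · simp [hiD, show N - (N - 1 - D + i) ≠ 1 by omega]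
  have hrec := sum_coeff_mul_moment_eq_zero (N := N) (m := N - 1 - D) hroot (by omega)
  rw [hdeg, sum_congr rfl hterm, sum_ite_eq', if_pos (self_mem_range_succ D)] at hrec
  exact hz (pow_eq_zero_iff (by omega) |>.mp hrec)

lemma exists_smul_sum_tpow_eq_sum_tpow {N D : ℕ} (hN : N ≠ 0) (c : ℂ) (x : Fin D → Fin 2 → ℂ) :
    ∃ y : Fin D → Fin 2 → ℂ, c • ∑ k, tpow (x k) N = ∑ k, tpow (y k) N := by
  obtain ⟨r, hr⟩ := IsAlgClosed.exists_pow_nat_eq c (Nat.pos_of_ne_zero hN)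
  exact ⟨fun k => r • x k, by simp only [tpow_smul, hr, smul_sum]⟩

/-- for `N ≥ 4` and `z ≠ 0`, the state
`X_N(z) = |1⟩^{⊗N} + z^{N-1} √N W_N` equals
`(1/(N-1)) ∑_{k=1}^{N-1} (|1⟩ + e^{2πi(k-1)/(N-1)} z |0⟩)^{⊗N}` and has optimal
bond dimension exactly `N-1`. -/
theorem bondDim_X (N : ℕ) (hN : 4 ≤ N) (z : ℂ) (hz : z ≠ 0) :
    (tpow e1 N + (z ^ (N - 1) * (Real.sqrt N : ℂ)) • Wstate N) =
        ((1 : ℂ) / ((N : ℂ) - 1)) • ∑ k : Fin (N - 1), tpow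
          (fun i : Fin 2 => if i = 1 then 1 else
            Complex.exp (2 * (Real.pi : ℂ) * Complex.I * (k : ℕ) / ((N : ℂ) - 1)) * z) N ∧
      bondDim (tpow e1 N + (z ^ (N - 1) * (Real.sqrt N : ℂ)) • Wstate N) = N - 1 := by
  have hrep : stateX N z = _ := stateX_eq_smul_sum_tpow (by omega) z
  refine ⟨hrep, IsLeast.csInf_eq ⟨?_, fun D ⟨x, hx⟩ => le_card_of_stateX_eq_sum_tpow hz hx⟩⟩
  obtain ⟨y, hy⟩ := exists_smul_sum_tpow_eq_sum_tpow (by omega : N ≠ 0) _ _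
  exact ⟨y, hrep.trans hy⟩
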